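/- Let X be a locally convex space and g : X → ℝ ∪ {+∞} proper and convex with closed convex hull cl co g. If x ∈ dom g and ε > g(x) − (cl co g)(x) ≥ 0, then ∂_ε g(x) is nonempty; more precisely x* ∈ ∂_ε g(x) if and only if g*(x*) + g(x) − ⟨x*, x⟩ ≤ ε, and the infimum over x* of g*(x*) − ⟨x*, x⟩ + g(x) equals g(x) − (cl co g)(x). -/

import Mathlib

/-! With `a = g x` real, `g*(p) - p x + a = a - (p x - g*(p))`, so the infimum over `p` is
`a - sup_p (p x - g*(p)) = a - g**(x)`. The ε-subgradient inequality for `p` is, after taking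
the supremum over `y`, the bound `g*(p) ≤ ε + p x - a`; a `p` nearly attaining the infimum,
which is `< ε`, satisfies it. -/

noncomputable section

variable {X : Type*} [AddCommGroup X] [Module ℝ X] [TopologicalSpace X]

/-- The Fenchel conjugate `g*(x*) = sup_x (⟨x*, x⟩ − g(x))` on the dual `X*` (weak*
topology). -/
noncomputable def conj (g : X → EReal) : WeakDual ℝ X → EReal :=
  fun p => ⨆ y : X, ((p y : EReal) - g y)

/-- The biconjugate `g** = (g*)*`, which equals the closed convex hull `cl co g` by the
Fenchel–Moreau theorem. -/
noncomputable def clco (g : X → EReal) : X → EReal :=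
  fun y => ⨆ p : WeakDual ℝ X, ((p y : EReal) - conj g p)

namespace EReal

theorem continuous_coe_sub (a : ℝ) : Continuous fun y : EReal => (a : EReal) - y :=
  continuous_iff_continuousAt.2 fun _ =>
    (continuousAt_add (.inl (coe_ne_top a)) (.inl (coe_ne_bot a))).comp
      (f := fun y => ((a : EReal), -y)) (continuous_const.prodMk continuous_neg).continuousAt

theorem coe_sub_iSup {ι : Sort*} (a : ℝ) (f : ι → EReal) :
    (a : EReal) - ⨆ i, f i = ⨅ i, (a : EReal) - f i :=
  Antitone.map_iSup_of_continuousAt (continuous_coe_sub a).continuousAt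
    (fun _ _ h => sub_le_sub le_rfl h) (coe_sub_bot a)

theorem sub_coe_add_eq_sub_sub (c b : EReal) (r : ℝ) : c - r + b = b - (r - c) := by
  rw [sub_eq_add_neg, sub_eq_add_neg b, neg_sub (.inl (coe_ne_bot r)) (.inl (coe_ne_top r))]
  ac_rfl

end EReal

theorem iInf_conj_sub_add_eq_sub_clco {g : X → EReal} {x : X} (hx : g x ≠ ⊤) (hx' : g x ≠ ⊥) :
    ⨅ p : WeakDual ℝ X, (conj g p - (p x : EReal) + g x) = g x - clco g x := by
  obtain ⟨a, ha⟩ : ∃ a : ℝ, g x = a := ⟨_, (EReal.coe_toReal hx hx').symm⟩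
  simp only [EReal.sub_coe_add_eq_sub_sub, ha, clco, EReal.coe_sub_iSup]

theorem epsSubgradient_iff_conj_add_sub_le {g : X → EReal} {x : X} (hx : g x ≠ ⊤) (hx' : g x ≠ ⊥)
    (ε : ℝ) (p : WeakDual ℝ X) :
    (∀ y, ((p y - p x : ℝ) : EReal) ≤ g y - g x + ε) ↔ conj g p + g x - (p x : EReal) ≤ ε := by
  obtain ⟨a, ha⟩ : ∃ a : ℝ, g x = a := ⟨_, (EReal.coe_toReal hx hx').symm⟩
  have : conj g p + a - (p x : EReal) ≤ ε ↔ conj g p ≤ ((ε + p x - a : ℝ) : EReal) := by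
    rw [EReal.sub_le_iff_le_add (.inl (EReal.coe_ne_bot _)) (.inl (EReal.coe_ne_top _)),
      ← EReal.le_sub_iff_add_le (.inl (EReal.coe_ne_bot _)) (.inl (EReal.coe_ne_top _))]
    norm_cast
  rw [ha, this, conj, iSup_le_iff]
  refine forall_congr' fun y => ?_
  induction g y using EReal.rec with
  | bot => simp only [EReal.bot_sub, EReal.bot_add, EReal.coe_sub_bot, le_bot_iff, top_le_iff,
      EReal.coe_ne_bot, EReal.coe_ne_top]
  | top => simp
  | coe c =>
    norm_cast
    constructor <;> intro h <;> linarith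

theorem epsSubdiff_nonempty_and_fenchel_characterization_general
    (g : X → EReal)
    (hne_bot : ∀ y : X, g y ≠ ⊥)
    (x : X) (hx : g x ≠ ⊤) (ε : ℝ)
    (hε : g x - clco g x < (ε : EReal)) :
    (∃ p : WeakDual ℝ X,
        ∀ y : X, ((p y - p x : ℝ) : EReal) ≤ g y - g x + (ε : EReal)) ∧
    (∀ p : WeakDual ℝ X,
        (∀ y : X, ((p y - p x : ℝ) : EReal) ≤ g y - g x + (ε : EReal)) ↔
          conj g p + g x - (p x : EReal) ≤ (ε : EReal)) ∧
    (⨅ p : WeakDual ℝ X, (conj g p - (p x : EReal) + g x)) = g x - clco g x := by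
  have key := epsSubgradient_iff_conj_add_sub_le hx (hne_bot x) ε
  have hinf := iInf_conj_sub_add_eq_sub_clco hx (hne_bot x)
  obtain ⟨p, hp⟩ := iInf_lt_iff.1 (hinf.trans_lt hε)
  refine ⟨⟨p, (key p).2 ?_⟩, key, hinf⟩
  rw [sub_eq_add_neg] at hp ⊢
  rw [add_right_comm] at hp
  exact hp.le

/-- If `g` is proper convex, `x ∈ dom g` and `ε > g(x) − (cl co g)(x) ≥ 0`, then `∂_ε g(x)` is
nonempty; moreover `x* ∈ ∂_ε g(x)` iff `g*(x*) + g(x) − ⟨x*, x⟩ ≤ ε`, and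
`inf_{x*} (g*(x*) − ⟨x*, x⟩ + g(x)) = g(x) − (cl co g)(x)`. -/
theorem epsSubdiff_nonempty_and_fenchel_characterization
    [IsTopologicalAddGroup X] [ContinuousSMul ℝ X] [LocallyConvexSpace ℝ X]
    (g : X → EReal)
    (hne_bot : ∀ y : X, g y ≠ ⊥) (hne_top : ∃ y : X, g y ≠ ⊤)
    (hconv : Convex ℝ {p : X × ℝ | g p.1 ≤ (p.2 : EReal)})
    (x : X) (hx : g x ≠ ⊤) (ε : ℝ)
    (h0 : (0 : EReal) ≤ g x - clco g x) (hε : g x - clco g x < (ε : EReal)) :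
    (∃ p : WeakDual ℝ X,
        ∀ y : X, ((p y - p x : ℝ) : EReal) ≤ g y - g x + (ε : EReal)) ∧
    (∀ p : WeakDual ℝ X,
        (∀ y : X, ((p y - p x : ℝ) : EReal) ≤ g y - g x + (ε : EReal)) ↔
          conj g p + g x - (p x : EReal) ≤ (ε : EReal)) ∧
    (⨅ p : WeakDual ℝ X, (conj g p - (p x : EReal) + g x)) = g x - clco g x :=
  epsSubdiff_nonempty_and_fenchel_characterization_general g hne_bot x hx ε hε
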